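/- For every t ∈ ℂ⁴ the second-page differential d₂ of the Frölicher spectral sequence of (Λ, ∂ + δ_t) vanishes, stated concretely as follows: for all bidegrees (p,q), whenever a ∈ Λ^{p,q} and b ∈ Λ^{p+1,q−1} satisfy δ_t a = 0 and ∂a = δ_t b, there exist c ∈ Λ^{p+1,q−1} with δ_t c = 0 and e ∈ Λ^{p+2,q−2} such that ∂b = ∂c + δ_t e. (This is the key part of the assertion that every small deformation of the Iwasawa manifold satisfies E₂ = E_∞.) -/

import Mathlib

noncomputable section

open ExteriorAlgebra

/-- The exterior algebra `Λ` over `ℂ` on six generators. -/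
abbrev Lam : Type := ExteriorAlgebra ℂ (Fin 6 → ℂ)

/-- The generators `x₁, x₂, x₃` of bidegree `(1,0)` (indexed by `0, 1, 2`). -/
def xg (i : Fin 3) : Lam := ExteriorAlgebra.ι ℂ (Pi.single (Fin.castAdd 3 i) 1)

/-- The generators `y₁, y₂, y₃` of bidegree `(0,1)` (indexed by `0, 1, 2`). -/
def yg (j : Fin 3) : Lam := ExteriorAlgebra.ι ℂ (Pi.single (Fin.natAdd 3 j) 1)

/-- The ordered wedge monomial `x_{i₁}∧⋯∧x_{i_p}∧y_{j₁}∧⋯∧y_{j_q}` attached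
to finsets `s = {i₁ < ⋯ < i_p}` and `u = {j₁ < ⋯ < j_q}`. -/
def monom (s u : Finset (Fin 3)) : Lam :=
  ((s.sort (· ≤ ·)).map xg).prod * ((u.sort (· ≤ ·)).map yg).prod

/-- The bigraded component `Λ^{p,q}`, the span of the monomials of bidegree `(p,q)`. -/
def bigraded (p q : ℤ) : Submodule ℂ Lam :=
  Submodule.span ℂ
    {m | ∃ s u : Finset (Fin 3), (s.card : ℤ) = p ∧ (u.card : ℤ) = q ∧ m = monom s u}

/-- The component of pure total degree `k` of `Λ`. -/
def degComp (k : ℕ) : Submodule ℂ Lam :=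
  LinearMap.range (ExteriorAlgebra.ι ℂ : (Fin 6 → ℂ) →ₗ[ℂ] Lam) ^ k

/-- The graded Leibniz rule: `d(a∧b) = d(a)∧b + (−1)ᵏ a∧d(b)` for `a` of pure
total degree `k`. -/
def IsAntiderivation (d : Lam →ₗ[ℂ] Lam) : Prop :=
  ∀ (k : ℕ), ∀ a ∈ degComp k, ∀ b : Lam,
    d (a * b) = d a * b + ((-1 : ℂ) ^ k) • (a * d b)

/-- `d` is the map `∂`: the antiderivation with `∂x₁ = ∂x₂ = 0`, `∂x₃ = −x₁∧x₂`,
`∂yⱼ = 0`. -/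
def IsDel (d : Lam →ₗ[ℂ] Lam) : Prop :=
  IsAntiderivation d ∧ d (xg 0) = 0 ∧ d (xg 1) = 0 ∧ d (xg 2) = -(xg 0 * xg 1) ∧
    (∀ j, d (yg j) = 0)

/-- `d` is the map `δ_t`: the antiderivation with `δ_t x₁ = δ_t x₂ = 0`,
`δ_t x₃ = t₂₁ x₁∧y₁ − t₁₁ x₂∧y₁ + t₂₂ x₁∧y₂ − t₁₂ x₂∧y₂`, `δ_t y₁ = δ_t y₂ = 0`,
`δ_t y₃ = −y₁∧y₂`. -/
def IsDelta (t11 t12 t21 t22 : ℂ) (d : Lam →ₗ[ℂ] Lam) : Prop :=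
  IsAntiderivation d ∧ d (xg 0) = 0 ∧ d (xg 1) = 0 ∧
    d (xg 2) = t21 • (xg 0 * yg 0) - t11 • (xg 1 * yg 0)
      + t22 • (xg 0 * yg 1) - t12 • (xg 1 * yg 1) ∧
    d (yg 0) = 0 ∧ d (yg 1) = 0 ∧ d (yg 2) = -(yg 0 * yg 1)

/-- The dimension of the quotient of the subspace `K` by (its intersection with)
the subspace `I`; when `I ⊆ K` this is `dim (K / I)`. -/
def quotDim (K I : Submodule ℂ Lam) : ℕ :=
  Module.finrank ℂ (↥K ⧸ Submodule.comap K.subtype I)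

lemma one_mem_degComp : (1 : Lam) ∈ degComp 0 := by
  rw [degComp, pow_zero]
  exact Submodule.one_le.mp le_rfl

lemma mem_degComp_one (v : Fin 6 → ℂ) : ExteriorAlgebra.ι ℂ v ∈ degComp 1 := by
  rw [degComp, pow_one]
  exact ⟨v, rfl⟩

lemma xg_mem (i : Fin 3) : xg i ∈ degComp 1 := mem_degComp_one _

lemma yg_mem (j : Fin 3) : yg j ∈ degComp 1 := mem_degComp_one _

lemma d_one {d : Lam →ₗ[ℂ] Lam} (hd : IsAntiderivation d) : d 1 = 0 := by
  have h := hd 0 1 one_mem_degComp 1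
  simp only [one_mul, mul_one, pow_zero, one_smul] at h
  exact (left_eq_add.mp h)

lemma d_mul_deg1 {d : Lam →ₗ[ℂ] Lam} (hd : IsAntiderivation d) {a : Lam}
    (ha : a ∈ degComp 1) (b : Lam) : d (a * b) = d a * b - a * d b := by
  have h := hd 1 a ha b
  rw [h, pow_one, neg_smul, one_smul, sub_eq_add_neg]

lemma d_yprod {d : Lam →ₗ[ℂ] Lam} (hd : IsAntiderivation d)
    (hy : ∀ j, d (yg j) = 0) (l : List (Fin 3)) : d ((l.map yg).prod) = 0 := by
  induction l with
  | nil => simpa using d_one hd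
  | cons j l ih =>
    rw [List.map_cons, List.prod_cons, d_mul_deg1 hd (yg_mem j), hy, ih, zero_mul,
      mul_zero, sub_zero]

lemma xprod_mem (l : List (Fin 3)) : (l.map xg).prod ∈ degComp l.length := by
  induction l with
  | nil => simpa using one_mem_degComp
  | cons i l ih =>
    rw [List.map_cons, List.prod_cons, List.length_cons, degComp, pow_succ']
    exact Submodule.mul_mem_mul ⟨_, rfl⟩ ih

lemma xg_sq (i : Fin 3) : xg i * xg i = 0 := ExteriorAlgebra.ι_sq_zero _

lemma xg_swap (i j : Fin 3) : xg i * xg j = -(xg j * xg i) := by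
  rw [eq_neg_iff_add_eq_zero]
  exact ExteriorAlgebra.ι_add_mul_swap (R := ℂ) (M := Fin 6 → ℂ)
    (Pi.single (Fin.castAdd 3 i) 1) (Pi.single (Fin.castAdd 3 j) 1)

lemma sort_eq_of (s : Finset (Fin 3)) (l : List (Fin 3)) (hl : l.Pairwise (· ≤ ·))
    (hs : s.val = ↑l) : s.sort (· ≤ ·) = l := by
  refine List.Perm.eq_of_pairwise' (Finset.pairwise_sort _ _) hl ?_
  rw [← Multiset.coe_eq_coe, Finset.sort_eq, hs]

lemma del_xprod {d : Lam →ₗ[ℂ] Lam} (hdel : IsDel d) (s : Finset (Fin 3))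
    (hs : s.card ≠ 1) : d (((s.sort (· ≤ ·)).map xg).prod) = 0 := by
  obtain ⟨hd, h0, h1, h2, _⟩ := hdel
  have key01 : xg 0 * (xg 0 * xg 1) = 0 := by rw [← mul_assoc, xg_sq, zero_mul]
  have key11 : xg 1 * (xg 0 * xg 1) = 0 := by
    rw [← mul_assoc, xg_swap 1 0, neg_mul, mul_assoc, xg_sq, mul_zero, neg_zero]
  have hsu : s ∈ Finset.univ := Finset.mem_univ s
  fin_cases hsu
  · -- s = ∅
    rw [sort_eq_of _ [] (by decide) (by decide)]
    simpa using d_one hd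
  · exact absurd (by decide) hs
  · exact absurd (by decide) hs
  · -- {0,1}
    rw [sort_eq_of _ [0, 1] (by decide) (by decide)]
    simp only [List.map_cons, List.map_nil, List.prod_cons, List.prod_nil, mul_one]
    rw [d_mul_deg1 hd (xg_mem 0), h0, h1, zero_mul, mul_zero, sub_zero]
  · exact absurd (by decide) hs
  · -- {0,2}
    rw [sort_eq_of _ [0, 2] (by decide) (by decide)]
    simp only [List.map_cons, List.map_nil, List.prod_cons, List.prod_nil, mul_one]
    rw [d_mul_deg1 hd (xg_mem 0), h0, h2, zero_mul, mul_neg, key01, neg_zero, zero_sub,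
      neg_zero]
  · -- {1,2}
    rw [sort_eq_of _ [1, 2] (by decide) (by decide)]
    simp only [List.map_cons, List.map_nil, List.prod_cons, List.prod_nil, mul_one]
    rw [d_mul_deg1 hd (xg_mem 1), h1, h2, zero_mul, mul_neg, key11, neg_zero, zero_sub,
      neg_zero]
  · -- {0,1,2}
    rw [sort_eq_of _ [0, 1, 2] (by decide) (by decide)]
    simp only [List.map_cons, List.map_nil, List.prod_cons, List.prod_nil, mul_one]
    rw [d_mul_deg1 hd (xg_mem 0), h0, zero_mul, d_mul_deg1 hd (xg_mem 1), h1, h2,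
      zero_mul, mul_neg, key11, neg_zero]
    simp

lemma del_vanish {d : Lam →ₗ[ℂ] Lam} (hdel : IsDel d) (p q : ℤ) (hp : p ≠ 1) :
    ∀ a ∈ bigraded p q, d a = 0 := by
  intro a ha
  refine Submodule.span_induction ?_ (map_zero d) ?_ ?_ ha
  · rintro m ⟨s, u, hsc, huc, rfl⟩
    have hk : s.card ≠ 1 := by
      intro h; exact hp (by rw [← hsc, h]; norm_num)
    have hmem : ((s.sort (· ≤ ·)).map xg).prod ∈ degComp (s.sort (· ≤ ·)).length :=
      xprod_mem _
    rw [monom, hdel.1 _ _ hmem, del_xprod hdel s hk, zero_mul,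
      d_yprod hdel.1 hdel.2.2.2.2, mul_zero, smul_zero, add_zero]
  · intro x y _ _ hx hy
    rw [map_add, hx, hy, add_zero]
  · intro c x _ hx
    rw [map_smul, hx, smul_zero]

/-- for every `t` the second-page differential `d₂` of the Frölicher
spectral sequence of `(Λ, ∂ + δ_t)` vanishes: whenever `a ∈ Λ^{p,q}` and
`b ∈ Λ^{p+1,q−1}` satisfy `δ_t a = 0` and `∂a = δ_t b`, there exist
`c ∈ Λ^{p+1,q−1}` with `δ_t c = 0` and `e ∈ Λ^{p+2,q−2}` such that
`∂b = ∂c + δ_t e`. -/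
theorem stmt18 (t11 t12 t21 t22 : ℂ) (del delta : Lam →ₗ[ℂ] Lam)
    (hdel : IsDel del) (hdelta : IsDelta t11 t12 t21 t22 delta) :
    ∀ p q : ℤ, ∀ a ∈ bigraded p q, ∀ b ∈ bigraded (p + 1) (q - 1),
      delta a = 0 → del a = delta b →
      ∃ c ∈ bigraded (p + 1) (q - 1), delta c = 0 ∧
        ∃ e ∈ bigraded (p + 2) (q - 2), del b = del c + delta e := by
  intro p q a ha b hb _ hab
  by_cases hp : p = 0
  · subst hp
    refine ⟨b, hb, ?_, 0, Submodule.zero_mem _, by rw [map_zero, add_zero]⟩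
    rw [← hab, del_vanish hdel 0 q (by norm_num) a ha]
  · refine ⟨0, Submodule.zero_mem _, by rw [map_zero], 0, Submodule.zero_mem _, ?_⟩
    rw [map_zero, map_zero, add_zero,
      del_vanish hdel (p + 1) (q - 1) (by omega) b hb]
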